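/- Let A{_τ×_σ}B be a smash biproduct bialgebra with σ left conormal and right conormal, and suppose normalized elements W,X,Y,Z make α = Σ Z¹_τ X¹ ⊗ W¹Y¹ ⊗ Z²Y² ⊗ 1_{Bτ}X²W² a quasitriangular structure. Then (C1''') Σ Z¹a_{(1)} ⊗ Z²a_{(2)} = Σ a_{(2)}Z¹ ⊗ a_{(1)}Z² holds for all a∈A; that is, Z satisfies the (QT4)-type almost-cocommutativity condition in A. -/
import Mathlib


open TensorProduct

noncomputable section

variable (k : Type*) [Field k]

/-- Componentwise multiplication on `H ⊗ H` induced by a multiplication map `m` on `H`. -/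
def mul2 (H : Type*) [AddCommGroup H] [Module k H] (m : H ⊗[k] H →ₗ[k] H) :
    (H ⊗[k] H) ⊗[k] (H ⊗[k] H) →ₗ[k] H ⊗[k] H :=
  (TensorProduct.map m m) ∘ₗ (TensorProduct.tensorTensorTensorComm k H H H H).toLinearMap

/-- Componentwise multiplication on `H ⊗ (H ⊗ H)`. -/
def mul3 (H : Type*) [AddCommGroup H] [Module k H] (m : H ⊗[k] H →ₗ[k] H) :
    (H ⊗[k] (H ⊗[k] H)) ⊗[k] (H ⊗[k] (H ⊗[k] H)) →ₗ[k] H ⊗[k] (H ⊗[k] H) :=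
  (TensorProduct.map m (mul2 k H m)) ∘ₗ
    (TensorProduct.tensorTensorTensorComm k H (H ⊗[k] H) H (H ⊗[k] H)).toLinearMap

/-- `R ∈ H ⊗ H` is a quasitriangular structure with respect to the bialgebra
structure data `(m, Δ, e, ε)` on `H`:
(QT1) `(ε⊗id)(R) = e = (id⊗ε)(R)`, (QT2) `(Δ⊗id)(R) = R₁₃R₂₃`,
(QT3) `(id⊗Δ)(R) = R₁₃R₁₂`, (QT4) `RΔ(h) = Δᶜᵒᵖ(h)R`. -/
def IsQT (H : Type*) [AddCommGroup H] [Module k H]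
    (m : H ⊗[k] H →ₗ[k] H) (Δ : H →ₗ[k] H ⊗[k] H) (e : H) (ε : H →ₗ[k] k)
    (R : H ⊗[k] H) : Prop :=
  (TensorProduct.lid k H) ((LinearMap.rTensor H ε) R) = e ∧
  (TensorProduct.rid k H) ((LinearMap.lTensor H ε) R) = e ∧
  (TensorProduct.assoc k H H H).toLinearMap ((LinearMap.rTensor H Δ) R) =
    mul3 k H m (((LinearMap.lTensor H (TensorProduct.mk k H H e)) R) ⊗ₜ[k] (e ⊗ₜ[k] R)) ∧
  (LinearMap.lTensor H Δ) R =
    mul3 k H m (((LinearMap.lTensor H (TensorProduct.mk k H H e)) R) ⊗ₜ[k]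
      ((LinearMap.lTensor H ((TensorProduct.mk k H H).flip e)) R)) ∧
  ∀ h : H, mul2 k H m (R ⊗ₜ[k] Δ h) =
    mul2 k H m ((TensorProduct.comm k H H (Δ h)) ⊗ₜ[k] R)

variable (A B : Type*)
  [Ring A] [Algebra k A] [Coalgebra k A]
  [Ring B] [Algebra k B] [Coalgebra k B]

variable (σ : B ⊗[k] A →ₗ[k] A ⊗[k] B) (τ : A ⊗[k] B →ₗ[k] B ⊗[k] A)

/-- The smash product multiplication `(a⊗b)(a'⊗b') = Σ aa'_σ ⊗ b_σ b'` on `A ⊗ B`. -/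
def smashMul : (A ⊗[k] B) ⊗[k] (A ⊗[k] B) →ₗ[k] A ⊗[k] B :=
  (TensorProduct.map (LinearMap.mul' k A) (LinearMap.mul' k B))
    ∘ₗ (TensorProduct.assoc k A A (B ⊗[k] B)).symm.toLinearMap
    ∘ₗ (TensorProduct.map LinearMap.id
         ((TensorProduct.assoc k A B B).toLinearMap
           ∘ₗ (TensorProduct.map σ LinearMap.id)
           ∘ₗ (TensorProduct.assoc k B A B).symm.toLinearMap))
    ∘ₗ (TensorProduct.assoc k A B (A ⊗[k] B)).toLinearMap

/-- The smash coproduct comultiplication `Δ(a⊗b) = Σ a₍₁₎ ⊗ b₍₁₎τ ⊗ a₍₂₎τ ⊗ b₍₂₎` on `A ⊗ B`. -/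
def smashComul : A ⊗[k] B →ₗ[k] (A ⊗[k] B) ⊗[k] (A ⊗[k] B) :=
  (TensorProduct.assoc k A B (A ⊗[k] B)).symm.toLinearMap
    ∘ₗ (TensorProduct.map LinearMap.id
         ((TensorProduct.assoc k B A B).toLinearMap
           ∘ₗ (TensorProduct.map τ LinearMap.id)
           ∘ₗ (TensorProduct.assoc k A B B).symm.toLinearMap))
    ∘ₗ (TensorProduct.assoc k A A (B ⊗[k] B)).toLinearMap
    ∘ₗ (TensorProduct.map (Coalgebra.comul : A →ₗ[k] A ⊗[k] A)
          (Coalgebra.comul : B →ₗ[k] B ⊗[k] B))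

/-- The counit `ε_A ⊗ ε_B` of `A ⊗ B`. -/
def smashCounit : A ⊗[k] B →ₗ[k] k :=
  (LinearMap.mul' k k) ∘ₗ
    TensorProduct.map (Coalgebra.counit : A →ₗ[k] k) (Coalgebra.counit : B →ₗ[k] k)

/-- The projection `π_A = id_A ⊗ ε_B`. -/
def piA : A ⊗[k] B →ₗ[k] A :=
  (TensorProduct.rid k A).toLinearMap ∘ₗ LinearMap.lTensor A (Coalgebra.counit : B →ₗ[k] k)

/-- The projection `π_B = ε_A ⊗ id_B`. -/
def piB : A ⊗[k] B →ₗ[k] B :=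
  (TensorProduct.lid k B).toLinearMap ∘ₗ LinearMap.rTensor B (Coalgebra.counit : A →ₗ[k] k)

/-- `A {_τ×_σ} B` is a smash biproduct bialgebra. -/
structure IsSmashBiproduct : Prop where
  mul_assoc : ∀ x y z : A ⊗[k] B,
    smashMul k A B σ ((smashMul k A B σ (x ⊗ₜ[k] y)) ⊗ₜ[k] z)
      = smashMul k A B σ (x ⊗ₜ[k] (smashMul k A B σ (y ⊗ₜ[k] z)))
  one_mul : ∀ x : A ⊗[k] B, smashMul k A B σ (((1:A) ⊗ₜ[k] (1:B)) ⊗ₜ[k] x) = x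
  mul_one : ∀ x : A ⊗[k] B, smashMul k A B σ (x ⊗ₜ[k] ((1:A) ⊗ₜ[k] (1:B))) = x
  sigma_one_left : ∀ b : B, σ (b ⊗ₜ[k] (1:A)) = (1:A) ⊗ₜ[k] b
  sigma_one_right : ∀ a : A, σ ((1:B) ⊗ₜ[k] a) = a ⊗ₜ[k] (1:B)
  comul_coassoc : ∀ x : A ⊗[k] B,
    (TensorProduct.assoc k (A ⊗[k] B) (A ⊗[k] B) (A ⊗[k] B)).toLinearMap
        ((LinearMap.rTensor (A ⊗[k] B) (smashComul k A B τ)) (smashComul k A B τ x))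
      = (LinearMap.lTensor (A ⊗[k] B) (smashComul k A B τ)) (smashComul k A B τ x)
  counit_comul : ∀ x : A ⊗[k] B,
    (TensorProduct.lid k (A ⊗[k] B))
        ((LinearMap.rTensor (A ⊗[k] B) (smashCounit k A B)) (smashComul k A B τ x)) = x
  comul_counit : ∀ x : A ⊗[k] B,
    (TensorProduct.rid k (A ⊗[k] B))
        ((LinearMap.lTensor (A ⊗[k] B) (smashCounit k A B)) (smashComul k A B τ x)) = x
  tau_counit_left : ∀ (a : A) (b : B),
    (TensorProduct.lid k A)
        ((LinearMap.rTensor A (Coalgebra.counit : B →ₗ[k] k)) (τ (a ⊗ₜ[k] b)))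
      = (Coalgebra.counit : B →ₗ[k] k) b • a
  tau_counit_right : ∀ (a : A) (b : B),
    (TensorProduct.rid k B)
        ((LinearMap.lTensor B (Coalgebra.counit : A →ₗ[k] k)) (τ (a ⊗ₜ[k] b)))
      = (Coalgebra.counit : A →ₗ[k] k) a • b
  comul_mul : ∀ x y : A ⊗[k] B,
    smashComul k A B τ (smashMul k A B σ (x ⊗ₜ[k] y))
      = mul2 k (A ⊗[k] B) (smashMul k A B σ)
          ((smashComul k A B τ x) ⊗ₜ[k] (smashComul k A B τ y))
  comul_one : smashComul k A B τ ((1:A) ⊗ₜ[k] (1:B))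
      = ((1:A) ⊗ₜ[k] (1:B)) ⊗ₜ[k] ((1:A) ⊗ₜ[k] (1:B))
  counit_mul : ∀ x y : A ⊗[k] B,
    smashCounit k A B (smashMul k A B σ (x ⊗ₜ[k] y)) = smashCounit k A B x * smashCounit k A B y
  counit_one : smashCounit k A B ((1:A) ⊗ₜ[k] (1:B)) = 1

/-- `σ` is right conormal: `(ε_A ⊗ id_B) ∘ σ = id_B ⊗ ε_A`. -/
def RightConormal : Prop := ∀ (b : B) (a : A),
  (TensorProduct.lid k B)
      ((LinearMap.rTensor B (Coalgebra.counit : A →ₗ[k] k)) (σ (b ⊗ₜ[k] a)))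
    = (Coalgebra.counit : A →ₗ[k] k) a • b

/-- `σ` is left conormal: `(id_A ⊗ ε_B) ∘ σ = ε_B ⊗ id_A`. -/
def LeftConormal : Prop := ∀ (b : B) (a : A),
  (TensorProduct.rid k A)
      ((LinearMap.lTensor A (Coalgebra.counit : B →ₗ[k] k)) (σ (b ⊗ₜ[k] a)))
    = (Coalgebra.counit : B →ₗ[k] k) b • a

/-- `τ` is left normal: `τ(a ⊗ 1_B) = 1_B ⊗ a`. -/
def LeftNormal : Prop := ∀ a : A, τ (a ⊗ₜ[k] (1:B)) = (1:B) ⊗ₜ[k] a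

/-- `τ` is right normal: `τ(1_A ⊗ b) = b ⊗ 1_A`. -/
def RightNormal : Prop := ∀ b : B, τ ((1:A) ⊗ₜ[k] b) = b ⊗ₜ[k] (1:A)


section Helpers
set_option linter.unusedSectionVars false
set_option synthInstance.maxHeartbeats 800000
set_option maxHeartbeats 1000000

lemma piA_tmul (a : A) (b : B) :
    piA k A B (a ⊗ₜ[k] b) = (Coalgebra.counit (R := k) b) • a := by
  simp [piA]

lemma smashCounit_tmul (a : A) (b : B) :
    smashCounit k A B (a ⊗ₜ[k] b)
      = Coalgebra.counit (R := k) a * Coalgebra.counit (R := k) b := by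
  simp [smashCounit, LinearMap.mul'_apply]

lemma smashMul_tmul (a a' : A) (b b' : B) :
    smashMul k A B σ ((a ⊗ₜ[k] b) ⊗ₜ[k] (a' ⊗ₜ[k] b')) =
      TensorProduct.map (LinearMap.mulLeft k a) (LinearMap.mulRight k b') (σ (b ⊗ₜ[k] a')) := by
  have key : ∀ w : A ⊗[k] B,
      (TensorProduct.map (LinearMap.mul' k A) (LinearMap.mul' k B))
        ((TensorProduct.assoc k A A (B ⊗[k] B)).symm
          (a ⊗ₜ[k] ((TensorProduct.assoc k A B B) (w ⊗ₜ[k] b'))))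
      = TensorProduct.map (LinearMap.mulLeft k a) (LinearMap.mulRight k b') w := by
    intro w
    induction w using TensorProduct.induction_on with
    | zero => simp
    | tmul x y => simp [LinearMap.mul'_apply]
    | add u v hu hv => simp only [tmul_add, add_tmul, map_add, hu, hv]
  simpa [smashMul] using key (σ (b ⊗ₜ[k] a'))


/-- The smash comultiplication without the initial `Δ_A ⊗ Δ_B`. -/
def smashComulAux : (A ⊗[k] A) ⊗[k] (B ⊗[k] B) →ₗ[k] (A ⊗[k] B) ⊗[k] (A ⊗[k] B) :=
  (TensorProduct.assoc k A B (A ⊗[k] B)).symm.toLinearMap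
    ∘ₗ (TensorProduct.map LinearMap.id
         ((TensorProduct.assoc k B A B).toLinearMap
           ∘ₗ (TensorProduct.map τ LinearMap.id)
           ∘ₗ (TensorProduct.assoc k A B B).symm.toLinearMap))
    ∘ₗ (TensorProduct.assoc k A A (B ⊗[k] B)).toLinearMap

lemma smashComul_apply (a : A) (b : B) :
    smashComul k A B τ (a ⊗ₜ[k] b)
      = smashComulAux k A B τ
          ((Coalgebra.comul (R := k) a) ⊗ₜ[k] (Coalgebra.comul (R := k) b)) := by
  rfl

lemma smashComulAux_tmul (a1 a2 : A) (b1 b2 : B) :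
    smashComulAux k A B τ ((a1 ⊗ₜ[k] a2) ⊗ₜ[k] (b1 ⊗ₜ[k] b2))
      = (TensorProduct.assoc k A B (A ⊗[k] B)).symm
          (a1 ⊗ₜ[k] ((TensorProduct.assoc k B A B) ((τ (a2 ⊗ₜ[k] b1)) ⊗ₜ[k] b2))) := by
  simp [smashComulAux]

lemma piA2_smashComulAux_tmul (hsb : IsSmashBiproduct k A B σ τ)
    (a1 a2 : A) (b1 b2 : B) :
    TensorProduct.map (piA k A B) (piA k A B)
        (smashComulAux k A B τ ((a1 ⊗ₜ[k] a2) ⊗ₜ[k] (b1 ⊗ₜ[k] b2)))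
      = (Coalgebra.counit (R := k) b1 * Coalgebra.counit (R := k) b2) • (a1 ⊗ₜ[k] a2) := by
  rw [smashComulAux_tmul]
  have key : ∀ w : B ⊗[k] A,
      TensorProduct.map (piA k A B) (piA k A B)
        ((TensorProduct.assoc k A B (A ⊗[k] B)).symm
          (a1 ⊗ₜ[k] ((TensorProduct.assoc k B A B) (w ⊗ₜ[k] b2))))
      = (Coalgebra.counit (R := k) b2) •
          (a1 ⊗ₜ[k]
            ((TensorProduct.lid k A)
              ((LinearMap.rTensor A (Coalgebra.counit : B →ₗ[k] k)) w))) := by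
    intro w
    induction w using TensorProduct.induction_on with
    | zero => simp
    | tmul x y =>
      simp [piA_tmul, smul_tmul', tmul_smul, smul_smul, mul_comm]
    | add u v hu hv => simp only [add_tmul, map_add, tmul_add, hu, hv, smul_add]
  rw [key (τ (a2 ⊗ₜ[k] b1)), hsb.tau_counit_left a2 b1, tmul_smul, smul_smul, mul_comm]

lemma P_smashComul_one (hsb : IsSmashBiproduct k A B σ τ) (a : A) :
    TensorProduct.map (piA k A B) (piA k A B) (smashComul k A B τ (a ⊗ₜ[k] (1:B)))
      = (Coalgebra.counit (R := k) (1:B)) • (Coalgebra.comul (R := k) a) := by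
  obtain ⟨S, hS⟩ := TensorProduct.exists_finset (Coalgebra.comul (R := k) a)
  obtain ⟨T, hT⟩ := TensorProduct.exists_finset (Coalgebra.comul (R := k) (1:B))
  have hT' : ∑ t ∈ T, (Coalgebra.counit (R := k) t.1) * (Coalgebra.counit (R := k) t.2)
      = Coalgebra.counit (R := k) (1:B) := by
    have h0 := Coalgebra.rTensor_counit_comul (R := k) (1:B)
    rw [hT] at h0
    have h1 : ∑ t ∈ T, (Coalgebra.counit (R := k) t.1) • t.2 = (1:B) := by
      have h2 := congrArg (TensorProduct.lid k B) h0
      simpa [map_sum] using h2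
    have h3 := congrArg (Coalgebra.counit (R := k) (A := B)) h1
    simpa [map_sum] using h3
  rw [smashComul_apply, hS, hT, sum_tmul, map_sum, map_sum]
  simp only [tmul_sum, map_sum, piA2_smashComulAux_tmul k A B σ τ hsb]
  calc ∑ s ∈ S, ∑ t ∈ T,
        (Coalgebra.counit (R := k) t.1 * Coalgebra.counit (R := k) t.2) • (s.1 ⊗ₜ[k] s.2)
      = ∑ s ∈ S, (Coalgebra.counit (R := k) (1:B)) • (s.1 ⊗ₜ[k] s.2) := by
        refine Finset.sum_congr rfl fun s _ => ?_
        rw [← Finset.sum_smul, hT']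
    _ = (Coalgebra.counit (R := k) (1:B)) • ∑ s ∈ S, s.1 ⊗ₜ[k] s.2 := by
        rw [Finset.smul_sum]

lemma epsB_mul (hsb : IsSmashBiproduct k A B σ τ) (b b' : B) :
    Coalgebra.counit (R := k) (b * b')
      = Coalgebra.counit (R := k) (1:A)
          * (Coalgebra.counit (R := k) b * Coalgebra.counit (R := k) b') := by
  have hone : Coalgebra.counit (R := k) (1:A) * Coalgebra.counit (R := k) (1:B) = 1 := by
    have h := hsb.counit_one
    rwa [smashCounit_tmul] at h
  have hm : smashMul k A B σ (((1:A) ⊗ₜ[k] b) ⊗ₜ[k] ((1:A) ⊗ₜ[k] b'))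
      = (1:A) ⊗ₜ[k] (b * b') := by
    rw [smashMul_tmul, hsb.sigma_one_left]
    simp
  have h := hsb.counit_mul ((1:A) ⊗ₜ[k] b) ((1:A) ⊗ₜ[k] b')
  rw [hm, smashCounit_tmul, smashCounit_tmul, smashCounit_tmul] at h
  have hA0 : Coalgebra.counit (R := k) (1:A) ≠ 0 := by
    intro h0
    rw [h0, zero_mul] at hone
    exact zero_ne_one hone
  apply mul_left_cancel₀ hA0
  linear_combination h

lemma piA_smashMul_tmul (hsb : IsSmashBiproduct k A B σ τ) (hlc : LeftConormal k A B σ)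
    (a a' : A) (b b' : B) :
    piA k A B (smashMul k A B σ ((a ⊗ₜ[k] b) ⊗ₜ[k] (a' ⊗ₜ[k] b')))
      = (Coalgebra.counit (R := k) (1:A)) •
          ((Coalgebra.counit (R := k) b * Coalgebra.counit (R := k) b') • (a * a')) := by
  rw [smashMul_tmul]
  have key : ∀ w : A ⊗[k] B,
      piA k A B (TensorProduct.map (LinearMap.mulLeft k a) (LinearMap.mulRight k b') w)
        = (Coalgebra.counit (R := k) (1:A) * Coalgebra.counit (R := k) b') •
            (a * (TensorProduct.rid k A)
              ((LinearMap.lTensor A (Coalgebra.counit : B →ₗ[k] k)) w)) := by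
    intro w
    induction w using TensorProduct.induction_on with
    | zero => simp
    | tmul x y =>
      simp only [TensorProduct.map_tmul, LinearMap.mulLeft_apply, LinearMap.mulRight_apply,
        piA_tmul, LinearMap.lTensor_tmul, TensorProduct.rid_tmul,
        epsB_mul k A B σ τ hsb y b', mul_smul_comm, smul_smul]
      congr 1
      ring
    | add u v hu hv => simp only [map_add, hu, hv, mul_add, smul_add, ← smul_add]
  rw [key (σ (b ⊗ₜ[k] a')), hlc b a', mul_smul_comm]
  module

lemma piA_smashMul (hsb : IsSmashBiproduct k A B σ τ) (hlc : LeftConormal k A B σ)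
    (x y : A ⊗[k] B) :
    piA k A B (smashMul k A B σ (x ⊗ₜ[k] y))
      = (Coalgebra.counit (R := k) (1:A)) • (piA k A B x * piA k A B y) := by
  induction x using TensorProduct.induction_on with
  | zero => simp
  | tmul a b =>
    induction y using TensorProduct.induction_on with
    | zero => simp
    | tmul a' b' =>
      rw [piA_smashMul_tmul k A B σ τ hsb hlc, piA_tmul, piA_tmul,
        smul_mul_assoc, mul_smul_comm]
      module
    | add u v hu hv =>
      simp only [tmul_add, map_add, hu, hv, mul_add, smul_add]
  | add u v hu hv =>
    simp only [add_tmul, map_add, hu, hv, add_mul, smul_add]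

lemma P_mul2 (hsb : IsSmashBiproduct k A B σ τ) (hlc : LeftConormal k A B σ)
    (u v : (A ⊗[k] B) ⊗[k] (A ⊗[k] B)) :
    TensorProduct.map (piA k A B) (piA k A B)
        (mul2 k (A ⊗[k] B) (smashMul k A B σ) (u ⊗ₜ[k] v))
      = (Coalgebra.counit (R := k) (1:A) * Coalgebra.counit (R := k) (1:A)) •
          mul2 k A (LinearMap.mul' k A)
            ((TensorProduct.map (piA k A B) (piA k A B) u) ⊗ₜ[k]
              (TensorProduct.map (piA k A B) (piA k A B) v)) := by
  induction u using TensorProduct.induction_on with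
  | zero => simp [mul2]
  | tmul x y =>
    induction v using TensorProduct.induction_on with
    | zero => simp [mul2]
    | tmul x' y' =>
      simp only [mul2, LinearMap.coe_comp, Function.comp_apply, LinearEquiv.coe_coe,
        TensorProduct.tensorTensorTensorComm_tmul, TensorProduct.map_tmul,
        LinearMap.mul'_apply]
      rw [piA_smashMul k A B σ τ hsb hlc, piA_smashMul k A B σ τ hsb hlc]
      simp only [smul_tmul', tmul_smul, smul_smul]
    | add u' v' hu hv =>
      simp only [tmul_add, map_add, hu, hv, smul_add]
  | add u' v' hu hv =>
    simp only [add_tmul, map_add, hu, hv, smul_add]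

lemma P_comm (x : (A ⊗[k] B) ⊗[k] (A ⊗[k] B)) :
    TensorProduct.map (piA k A B) (piA k A B)
        ((TensorProduct.comm k (A ⊗[k] B) (A ⊗[k] B)) x)
      = (TensorProduct.comm k A A)
          (TensorProduct.map (piA k A B) (piA k A B) x) := by
  induction x using TensorProduct.induction_on with
  | zero => simp
  | tmul u v => simp
  | add u v hu hv => simp only [map_add, hu, hv]

section SumHelpers

variable {ι : Type} [Fintype ι] {M : Type*} [Ring M] [Algebra k M]

lemma sum_smul_tmul_right (c : ι → k) (u : M) (v : ι → M) :
    ∑ m : ι, c m • (u ⊗ₜ[k] v m) = u ⊗ₜ[k] (∑ m : ι, c m • v m) := by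
  simp [tmul_sum, tmul_smul]

lemma sum_smul_tmul_left (c : ι → k) (u : M) (v : ι → M) :
    ∑ m : ι, c m • (v m ⊗ₜ[k] u) = (∑ m : ι, c m • v m) ⊗ₜ[k] u := by
  simp [sum_tmul, smul_tmul']

lemma sum_smul_mul_right (c : ι → k) (u : M) (v : ι → M) :
    ∑ m : ι, c m • (u * v m) = u * (∑ m : ι, c m • v m) := by
  simp [Finset.mul_sum, mul_smul_comm]

end SumHelpers

end Helpers

/-- If `σ` is left and right conormal and normalized elements `W, X, Y, Z` make
`α = Σ Z¹_τ X¹ ⊗ W¹Y¹ ⊗ Z²Y² ⊗ 1_{Bτ}X²W²` a quasitriangular structure, then (C1''')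
`Σ Z¹a₍₁₎ ⊗ Z²a₍₂₎ = Σ a₍₂₎Z¹ ⊗ a₍₁₎Z²` holds for all `a ∈ A`. -/
theorem stmt18 (hsb : IsSmashBiproduct k A B σ τ)
    (hlc : LeftConormal k A B σ) (hrc : RightConormal k A B σ)
    (W : B ⊗[k] B) (X : A ⊗[k] B) (Y : B ⊗[k] A) (Z : A ⊗[k] A)
    -- normalization (N1)-(N4)
    (hN1l : (TensorProduct.lid k B)
      ((LinearMap.rTensor B (Coalgebra.counit : B →ₗ[k] k)) W) = 1)
    (hN1r : (TensorProduct.rid k B)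
      ((LinearMap.lTensor B (Coalgebra.counit : B →ₗ[k] k)) W) = 1)
    (hN2l : (TensorProduct.lid k B)
      ((LinearMap.rTensor B (Coalgebra.counit : A →ₗ[k] k)) X) = 1)
    (hN2r : (TensorProduct.rid k A)
      ((LinearMap.lTensor A (Coalgebra.counit : B →ₗ[k] k)) X) = 1)
    (hN3l : (TensorProduct.lid k A)
      ((LinearMap.rTensor A (Coalgebra.counit : B →ₗ[k] k)) Y) = 1)
    (hN3r : (TensorProduct.rid k B)
      ((LinearMap.lTensor B (Coalgebra.counit : A →ₗ[k] k)) Y) = 1)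
    (hN4l : (TensorProduct.lid k A)
      ((LinearMap.rTensor A (Coalgebra.counit : A →ₗ[k] k)) Z) = 1)
    (hN4r : (TensorProduct.rid k A)
      ((LinearMap.lTensor A (Coalgebra.counit : A →ₗ[k] k)) Z) = 1)
    -- representations
    (ιZ ιX ιW ιY ι₁ : Type)
    [Fintype ιZ] [Fintype ιX] [Fintype ιW] [Fintype ιY] [Fintype ι₁]
    (z1 z2 : ιZ → A) (hZ : Z = ∑ i : ιZ, z1 i ⊗ₜ[k] z2 i)
    (x1 : ιX → A) (x2 : ιX → B) (hX : X = ∑ j : ιX, x1 j ⊗ₜ[k] x2 j)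
    (w1 w2 : ιW → B) (hW : W = ∑ l : ιW, w1 l ⊗ₜ[k] w2 l)
    (y1 : ιY → B) (y2 : ιY → A) (hY : Y = ∑ m : ιY, y1 m ⊗ₜ[k] y2 m)
    (p : ιZ → ι₁ → B) (q : ιZ → ι₁ → A)
    (hτ : ∀ i, τ (z1 i ⊗ₜ[k] (1:B)) = ∑ t : ι₁, p i t ⊗ₜ[k] q i t)
    -- α is a quasitriangular structure
    (hqt : IsQT k (A ⊗[k] B) (smashMul k A B σ) (smashComul k A B τ)
      ((1:A) ⊗ₜ[k] (1:B)) (smashCounit k A B)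
      (∑ i : ιZ, ∑ t : ι₁, ∑ j : ιX, ∑ m : ιY, ∑ l : ιW,
        ((q i t * x1 j) ⊗ₜ[k] (w1 l * y1 m)) ⊗ₜ[k]
          ((z2 i * y2 m) ⊗ₜ[k] (p i t * (x2 j * w2 l))))) :
    ∀ a : A,
      mul2 k A (LinearMap.mul' k A) (Z ⊗ₜ[k] (Coalgebra.comul (R := k) a))
        = mul2 k A (LinearMap.mul' k A)
            ((TensorProduct.comm k A A (Coalgebra.comul (R := k) a)) ⊗ₜ[k] Z) := by
  intro a
  have hone : Coalgebra.counit (R := k) (1:A) * Coalgebra.counit (R := k) (1:B) = 1 := by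
    have h := hsb.counit_one
    rwa [smashCounit_tmul] at h
  have hA0 : Coalgebra.counit (R := k) (1:A) ≠ 0 := fun h0 => by
    rw [h0, zero_mul] at hone; exact zero_ne_one hone
  have hW' : ∑ l : ιW, Coalgebra.counit (R := k) (w1 l) * Coalgebra.counit (R := k) (w2 l)
      = Coalgebra.counit (R := k) (1:B) := by
    have h1 : ∑ l : ιW, Coalgebra.counit (R := k) (w1 l) • w2 l = (1:B) := by
      rw [hW] at hN1l
      simpa [map_sum] using hN1l
    have h2 := congrArg (Coalgebra.counit (R := k) (A := B)) h1
    simpa [map_sum] using h2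
  have hX' : ∑ j : ιX, Coalgebra.counit (R := k) (x2 j) • x1 j = (1:A) := by
    rw [hX] at hN2r
    simpa [map_sum] using hN2r
  have hY' : ∑ m : ιY, Coalgebra.counit (R := k) (y1 m) • y2 m = (1:A) := by
    rw [hY] at hN3l
    simpa [map_sum] using hN3l
  have hP' : ∀ i, ∑ t : ι₁, Coalgebra.counit (R := k) (p i t) • q i t
      = Coalgebra.counit (R := k) (1:B) • z1 i := by
    intro i
    have h := hsb.tau_counit_left (z1 i) (1:B)
    rw [hτ i] at h
    simpa [map_sum] using h
  have step1 : ∀ (i : ιZ) (t : ι₁) (j : ιX) (m : ιY) (l : ιW),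
      TensorProduct.map (piA k A B) (piA k A B)
        ((((q i t * x1 j) ⊗ₜ[k] (w1 l * y1 m)) ⊗ₜ[k]
          ((z2 i * y2 m) ⊗ₜ[k] (p i t * (x2 j * w2 l)))))
      = ((Coalgebra.counit (R := k) (w1 l) * Coalgebra.counit (R := k) (w2 l)) *
          (Coalgebra.counit (R := k) (y1 m) *
            (Coalgebra.counit (R := k) (p i t) *
              (Coalgebra.counit (R := k) (x2 j) *
                (Coalgebra.counit (R := k) (1:A) * Coalgebra.counit (R := k) (1:A) *
                  Coalgebra.counit (R := k) (1:A))))))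
          • ((q i t * x1 j) ⊗ₜ[k] (z2 i * y2 m)) := by
    intro i t j m l
    simp only [TensorProduct.map_tmul, piA_tmul, smul_tmul', tmul_smul, smul_smul]
    rw [epsB_mul k A B σ τ hsb (w1 l) (y1 m), epsB_mul k A B σ τ hsb (p i t),
      epsB_mul k A B σ τ hsb (x2 j)]
    congr 1
    ring
  have hPR : TensorProduct.map (piA k A B) (piA k A B)
      (∑ i : ιZ, ∑ t : ι₁, ∑ j : ιX, ∑ m : ιY, ∑ l : ιW,
        ((q i t * x1 j) ⊗ₜ[k] (w1 l * y1 m)) ⊗ₜ[k]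
          ((z2 i * y2 m) ⊗ₜ[k] (p i t * (x2 j * w2 l))))
      = Coalgebra.counit (R := k) (1:A) • Z := by
    rw [hZ, Finset.smul_sum]
    simp only [map_sum, step1]
    refine Finset.sum_congr rfl fun i _ => ?_
    calc
      ∑ t : ι₁, ∑ j : ιX, ∑ m : ιY, ∑ l : ιW,
          ((Coalgebra.counit (R := k) (w1 l) * Coalgebra.counit (R := k) (w2 l)) *
            (Coalgebra.counit (R := k) (y1 m) *
              (Coalgebra.counit (R := k) (p i t) *
                (Coalgebra.counit (R := k) (x2 j) *
                  (Coalgebra.counit (R := k) (1:A) * Coalgebra.counit (R := k) (1:A) *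
                    Coalgebra.counit (R := k) (1:A))))))
            • ((q i t * x1 j) ⊗ₜ[k] (z2 i * y2 m))
        = ∑ t : ι₁, ∑ j : ιX, ∑ m : ιY,
            (Coalgebra.counit (R := k) (1:B) *
              (Coalgebra.counit (R := k) (y1 m) *
                (Coalgebra.counit (R := k) (p i t) *
                  (Coalgebra.counit (R := k) (x2 j) *
                    (Coalgebra.counit (R := k) (1:A) * Coalgebra.counit (R := k) (1:A) *
                      Coalgebra.counit (R := k) (1:A))))))
              • ((q i t * x1 j) ⊗ₜ[k] (z2 i * y2 m)) := by
          refine Finset.sum_congr rfl fun t _ => Finset.sum_congr rfl fun j _ =>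
            Finset.sum_congr rfl fun m _ => ?_
          rw [← Finset.sum_smul, ← Finset.sum_mul, hW']
      _ = ∑ t : ι₁, ∑ j : ιX,
            (Coalgebra.counit (R := k) (1:B) *
              (Coalgebra.counit (R := k) (p i t) *
                (Coalgebra.counit (R := k) (x2 j) *
                  (Coalgebra.counit (R := k) (1:A) * Coalgebra.counit (R := k) (1:A) *
                    Coalgebra.counit (R := k) (1:A)))))
              • ((q i t * x1 j) ⊗ₜ[k] z2 i) := by
          refine Finset.sum_congr rfl fun t _ => Finset.sum_congr rfl fun j _ => ?_
          calc
            ∑ m : ιY,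
                (Coalgebra.counit (R := k) (1:B) *
                  (Coalgebra.counit (R := k) (y1 m) *
                    (Coalgebra.counit (R := k) (p i t) *
                      (Coalgebra.counit (R := k) (x2 j) *
                        (Coalgebra.counit (R := k) (1:A) * Coalgebra.counit (R := k) (1:A) *
                          Coalgebra.counit (R := k) (1:A))))))
                  • ((q i t * x1 j) ⊗ₜ[k] (z2 i * y2 m))
              = ∑ m : ιY,
                  (Coalgebra.counit (R := k) (1:B) *
                    (Coalgebra.counit (R := k) (p i t) *
                      (Coalgebra.counit (R := k) (x2 j) *
                        (Coalgebra.counit (R := k) (1:A) * Coalgebra.counit (R := k) (1:A) *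
                          Coalgebra.counit (R := k) (1:A)))))
                    • (Coalgebra.counit (R := k) (y1 m) •
                        ((q i t * x1 j) ⊗ₜ[k] (z2 i * y2 m))) := by
                refine Finset.sum_congr rfl fun m _ => ?_
                rw [smul_smul]
                congr 1
                ring
            _ = (Coalgebra.counit (R := k) (1:B) *
                  (Coalgebra.counit (R := k) (p i t) *
                    (Coalgebra.counit (R := k) (x2 j) *
                      (Coalgebra.counit (R := k) (1:A) * Coalgebra.counit (R := k) (1:A) *
                        Coalgebra.counit (R := k) (1:A)))))
                  • ((q i t * x1 j) ⊗ₜ[k]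
                      (z2 i * ∑ m : ιY, Coalgebra.counit (R := k) (y1 m) • y2 m)) := by
                rw [← Finset.smul_sum, sum_smul_tmul_right k, sum_smul_mul_right k]
            _ = (Coalgebra.counit (R := k) (1:B) *
                  (Coalgebra.counit (R := k) (p i t) *
                    (Coalgebra.counit (R := k) (x2 j) *
                      (Coalgebra.counit (R := k) (1:A) * Coalgebra.counit (R := k) (1:A) *
                        Coalgebra.counit (R := k) (1:A)))))
                  • ((q i t * x1 j) ⊗ₜ[k] z2 i) := by
                rw [hY', mul_one]
      _ = ∑ t : ι₁,
            (Coalgebra.counit (R := k) (1:B) *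
              (Coalgebra.counit (R := k) (p i t) *
                (Coalgebra.counit (R := k) (1:A) * Coalgebra.counit (R := k) (1:A) *
                  Coalgebra.counit (R := k) (1:A))))
              • (q i t ⊗ₜ[k] z2 i) := by
          refine Finset.sum_congr rfl fun t _ => ?_
          calc
            ∑ j : ιX,
                (Coalgebra.counit (R := k) (1:B) *
                  (Coalgebra.counit (R := k) (p i t) *
                    (Coalgebra.counit (R := k) (x2 j) *
                      (Coalgebra.counit (R := k) (1:A) * Coalgebra.counit (R := k) (1:A) *
                        Coalgebra.counit (R := k) (1:A)))))
                  • ((q i t * x1 j) ⊗ₜ[k] z2 i)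
              = ∑ j : ιX,
                  (Coalgebra.counit (R := k) (1:B) *
                    (Coalgebra.counit (R := k) (p i t) *
                      (Coalgebra.counit (R := k) (1:A) * Coalgebra.counit (R := k) (1:A) *
                        Coalgebra.counit (R := k) (1:A))))
                    • (Coalgebra.counit (R := k) (x2 j) •
                        ((q i t * x1 j) ⊗ₜ[k] z2 i)) := by
                refine Finset.sum_congr rfl fun j _ => ?_
                rw [smul_smul]
                congr 1
                ring
            _ = (Coalgebra.counit (R := k) (1:B) *
                  (Coalgebra.counit (R := k) (p i t) *
                    (Coalgebra.counit (R := k) (1:A) * Coalgebra.counit (R := k) (1:A) *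
                      Coalgebra.counit (R := k) (1:A))))
                  • ((q i t * ∑ j : ιX, Coalgebra.counit (R := k) (x2 j) • x1 j) ⊗ₜ[k] z2 i) := by
                rw [← Finset.smul_sum, sum_smul_tmul_left k, sum_smul_mul_right k]
            _ = (Coalgebra.counit (R := k) (1:B) *
                  (Coalgebra.counit (R := k) (p i t) *
                    (Coalgebra.counit (R := k) (1:A) * Coalgebra.counit (R := k) (1:A) *
                      Coalgebra.counit (R := k) (1:A))))
                  • (q i t ⊗ₜ[k] z2 i) := by
                rw [hX', mul_one]
      _ = (Coalgebra.counit (R := k) (1:B) *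
            (Coalgebra.counit (R := k) (1:A) * Coalgebra.counit (R := k) (1:A) *
              Coalgebra.counit (R := k) (1:A)))
            • ((∑ t : ι₁, Coalgebra.counit (R := k) (p i t) • q i t) ⊗ₜ[k] z2 i) := by
          calc
            ∑ t : ι₁,
                (Coalgebra.counit (R := k) (1:B) *
                  (Coalgebra.counit (R := k) (p i t) *
                    (Coalgebra.counit (R := k) (1:A) * Coalgebra.counit (R := k) (1:A) *
                      Coalgebra.counit (R := k) (1:A))))
                  • (q i t ⊗ₜ[k] z2 i)
              = ∑ t : ι₁,
                  (Coalgebra.counit (R := k) (1:B) *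
                    (Coalgebra.counit (R := k) (1:A) * Coalgebra.counit (R := k) (1:A) *
                      Coalgebra.counit (R := k) (1:A)))
                    • (Coalgebra.counit (R := k) (p i t) • (q i t ⊗ₜ[k] z2 i)) := by
                refine Finset.sum_congr rfl fun t _ => ?_
                rw [smul_smul]
                congr 1
                ring
            _ = (Coalgebra.counit (R := k) (1:B) *
                  (Coalgebra.counit (R := k) (1:A) * Coalgebra.counit (R := k) (1:A) *
                    Coalgebra.counit (R := k) (1:A)))
                  • ((∑ t : ι₁, Coalgebra.counit (R := k) (p i t) • q i t) ⊗ₜ[k] z2 i) := by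
                rw [← Finset.smul_sum, sum_smul_tmul_left k]
      _ = Coalgebra.counit (R := k) (1:A) • (z1 i ⊗ₜ[k] z2 i) := by
          rw [hP' i, ← smul_tmul', smul_smul]
          congr 1
          linear_combination (Coalgebra.counit (R := k) (1:A) * Coalgebra.counit (R := k) (1:B)
            + 1) * Coalgebra.counit (R := k) (1:A) * hone
  have EL : TensorProduct.map (piA k A B) (piA k A B)
      (mul2 k (A ⊗[k] B) (smashMul k A B σ)
        ((∑ i : ιZ, ∑ t : ι₁, ∑ j : ιX, ∑ m : ιY, ∑ l : ιW,
            ((q i t * x1 j) ⊗ₜ[k] (w1 l * y1 m)) ⊗ₜ[k]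
              ((z2 i * y2 m) ⊗ₜ[k] (p i t * (x2 j * w2 l)))) ⊗ₜ[k]
          smashComul k A B τ (a ⊗ₜ[k] (1:B))))
      = (Coalgebra.counit (R := k) (1:A) * Coalgebra.counit (R := k) (1:A)) •
          mul2 k A (LinearMap.mul' k A) (Z ⊗ₜ[k] Coalgebra.comul (R := k) a) := by
    rw [P_mul2 k A B σ τ hsb hlc, hPR, P_smashComul_one k A B σ τ hsb a, tmul_smul, ← smul_tmul']
    simp only [map_smul, smul_smul]
    congr 1
    linear_combination (Coalgebra.counit (R := k) (1:A) * Coalgebra.counit (R := k) (1:A)) * hone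
  have ER : TensorProduct.map (piA k A B) (piA k A B)
      (mul2 k (A ⊗[k] B) (smashMul k A B σ)
        ((TensorProduct.comm k (A ⊗[k] B) (A ⊗[k] B)
            (smashComul k A B τ (a ⊗ₜ[k] (1:B)))) ⊗ₜ[k]
          (∑ i : ιZ, ∑ t : ι₁, ∑ j : ιX, ∑ m : ιY, ∑ l : ιW,
            ((q i t * x1 j) ⊗ₜ[k] (w1 l * y1 m)) ⊗ₜ[k]
              ((z2 i * y2 m) ⊗ₜ[k] (p i t * (x2 j * w2 l))))))
      = (Coalgebra.counit (R := k) (1:A) * Coalgebra.counit (R := k) (1:A)) •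
          mul2 k A (LinearMap.mul' k A)
            ((TensorProduct.comm k A A (Coalgebra.comul (R := k) a)) ⊗ₜ[k] Z) := by
    rw [P_mul2 k A B σ τ hsb hlc, P_comm k A B, P_smashComul_one k A B σ τ hsb a, hPR,
      map_smul, tmul_smul, ← smul_tmul']
    simp only [map_smul, smul_smul]
    congr 1
    linear_combination (Coalgebra.counit (R := k) (1:A) * Coalgebra.counit (R := k) (1:A)) * hone
  have E := congrArg (TensorProduct.map (piA k A B) (piA k A B))
    (hqt.2.2.2.2 (a ⊗ₜ[k] (1:B)))
  rw [EL, ER] at E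
  exact smul_right_injective (A ⊗[k] A) (mul_ne_zero hA0 hA0) E

end
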